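/- arXiv:1104.0084 — 9 statements merged into one kernel-verified Lean document; each statement's English description precedes it below -/
import Mathlib

section
/- Let x, y : ℤ × ℤ → ℂ with x nowhere zero, and for ν : ℂ define 2×2 matrices L(l,m) = [[x(l+1,m)/x(l,m), ν],[ν, 0]] and M(l,m) = [[x(l,m+1)/x(l,m), ν],[ν, y(l,m)]]. Then the compatibility condition L(l,m+1)·M(l,m) = M(l+1,m)·L(l,m) holds for all (l,m) and all ν ∈ ℂ if and only if x and y satisfy, for all (l,m): x(l+1,m+1)/x(l,m+1) + y(l,m) = x(l+1,m+1)/x(l+1,m) and x(l+1,m)/x(l,m) + y(l+1,m) = x(l,m+1)/x(l,m). -/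
theorem stmt_1 (x y : ℤ × ℤ → ℂ) (hx : ∀ p, x p ≠ 0) :
    (∀ (ν : ℂ) (l m : ℤ),
      (!![x (l+1, m+1) / x (l, m+1), ν; ν, (0 : ℂ)] *
        !![x (l, m+1) / x (l, m), ν; ν, y (l, m)]) =
      (!![x (l+1, m+1) / x (l+1, m), ν; ν, y (l+1, m)] *
        !![x (l+1, m) / x (l, m), ν; ν, (0 : ℂ)])) ↔
    (∀ l m : ℤ,
      x (l+1, m+1) / x (l, m+1) + y (l, m) = x (l+1, m+1) / x (l+1, m) ∧
      x (l+1, m) / x (l, m) + y (l+1, m) = x (l, m+1) / x (l, m)) := by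
  constructor
  · intro h l m
    have h1 := h 1 l m
    have e01 := (Matrix.ext_iff.2 h1) 0 1
    have e10 := (Matrix.ext_iff.2 h1) 1 0
    simp [Matrix.mul_apply, Fin.sum_univ_two] at e01 e10
    constructor
    · linear_combination e01
    · linear_combination -e10
  · intro h ν l m
    ext i j
    fin_cases i <;> fin_cases j <;>
      simp [Matrix.mul_apply, Fin.sum_univ_two]
    · have hc : x (l+1, m+1) / x (l, m+1) * (x (l, m+1) / x (l, m)) =
          x (l+1, m+1) / x (l+1, m) * (x (l+1, m) / x (l, m)) := by
        field_simp [hx (l, m+1), hx (l+1, m), hx (l, m)]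
      linear_combination hc
    · linear_combination ν * (h l m).1
    · linear_combination -ν * (h l m).2
end

section
/- Let x : ℤ × ℤ → ℂ be nowhere zero and μ : ℤ → ℂ. Define y(l,m) = μ(m)·x(l,m)/x(l,m+1). Then the pair (x,y) satisfies the system x(l+1,m+1)/x(l,m+1) + y(l,m) = x(l+1,m+1)/x(l+1,m) and x(l+1,m)/x(l,m) + y(l+1,m) = x(l,m+1)/x(l,m) for all (l,m) if and only if x satisfies the degenerate lattice modified KdV equation x(l+1,m+1)·(x(l,m+1) − x(l+1,m)) = μ(m)·x(l+1,m)·x(l,m) for all (l,m). -/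
/-!
Substituting `y = μ x / x̂` and clearing denominators, each equation of the system becomes
`x̂̄ x̄ + μ x x̄ = x̂̄ x̂`, which is the degenerate lattice mKdV equation at the same lattice point.
-/

section Quadrilateral

variable {K : Type*} [Field K] {x x₁ x₂ x₁₂ μ : K}

/- Corner values of one quadrilateral: `x = x(l,m)`, `x₁ = x(l+1,m)`, `x₂ = x(l,m+1)`,
`x₁₂ = x(l+1,m+1)`. -/

theorem first_equation_iff_degenerateLMKdV (h₁ : x₁ ≠ 0) (h₂ : x₂ ≠ 0) :
    x₁₂ / x₂ + μ * x / x₂ = x₁₂ / x₁ ↔ x₁₂ * (x₂ - x₁) = μ * x₁ * x := by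
  rw [← add_div, div_eq_div_iff h₂ h₁]
  constructor <;> intro e <;> linear_combination -e

theorem second_equation_iff_degenerateLMKdV (h : x ≠ 0) (h₁₂ : x₁₂ ≠ 0) :
    x₁ / x + μ * x₁ / x₁₂ = x₂ / x ↔ x₁₂ * (x₂ - x₁) = μ * x₁ * x := by
  rw [← eq_sub_iff_add_eq', ← sub_div, div_eq_div_iff h₁₂ h]
  constructor <;> intro e <;> linear_combination -e

end Quadrilateral

theorem stmt_2 (x : ℤ × ℤ → ℂ) (hx : ∀ p, x p ≠ 0) (μ : ℤ → ℂ)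
    (y : ℤ × ℤ → ℂ) (hy : ∀ l m : ℤ, y (l, m) = μ m * x (l, m) / x (l, m+1)) :
    (∀ l m : ℤ,
      x (l+1, m+1) / x (l, m+1) + y (l, m) = x (l+1, m+1) / x (l+1, m) ∧
      x (l+1, m) / x (l, m) + y (l+1, m) = x (l, m+1) / x (l, m)) ↔
    (∀ l m : ℤ,
      x (l+1, m+1) * (x (l, m+1) - x (l+1, m)) = μ m * x (l+1, m) * x (l, m)) := by
  simp only [hy, first_equation_iff_degenerateLMKdV (hx _) (hx _),
    second_equation_iff_degenerateLMKdV (hx _) (hx _), and_self]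
end

section
/- Let x, β : ℤ × ℤ → ℂ with x nowhere zero, and μ : ℤ → ℂ. Suppose for all (l,m): x(l,m)/x(l+1,m+1) = β(l,m) and x(l,m+1)/x(l+1,m) = μ(m)·β(l,m) + 1. If x satisfies the degenerate LMKdV equation x(l+1,m+1)·(x(l,m+1) − x(l+1,m)) = μ(m)·x(l+1,m)·x(l,m), then β satisfies β(l+1,m)·(μ(m)·β(l,m) + 1) = β(l,m+1)·(μ(m+1)·β(l+1,m+1) + 1) for all (l,m). -/
theorem stmt_4 (x β : ℤ × ℤ → ℂ) (μ : ℤ → ℂ) (hx : ∀ p, x p ≠ 0)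
    (hb1 : ∀ l m : ℤ, x (l, m) / x (l+1, m+1) = β (l, m))
    (hb2 : ∀ l m : ℤ, x (l, m+1) / x (l+1, m) = μ m * β (l, m) + 1)
    (hlmkdv : ∀ l m : ℤ,
      x (l+1, m+1) * (x (l, m+1) - x (l+1, m)) = μ m * x (l+1, m) * x (l, m)) :
    ∀ l m : ℤ,
      β (l+1, m) * (μ m * β (l, m) + 1) = β (l, m+1) * (μ (m+1) * β (l+1, m+1) + 1) := by
  intro l m
  rw [← hb1 (l+1) m, ← hb2 l m, ← hb1 l (m+1), ← hb2 (l+1) (m+1),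
    div_mul_div_cancel₀' (hx (l+1, m)), div_mul_div_cancel₀ (hx (l+1, m+1+1))]
end

section
/- Let x, z : ℤ × ℤ → ℂ both nowhere zero, satisfying for all (l,m) the pair: x(l+1,m)/x(l+1,m+1) − x(l,m)/x(l,m+1) = z(l,m+1)/x(l+1,m+1), and z(l,m)/z(l,m+1) − z(l+1,m)/z(l+1,m+1) = z(l,m)/x(l+1,m). Then the quantity ψ(l,m) = x(l,m)/x(l,m+1) satisfies, for all (l,m), the relation z(l,m+1)/z(l,m+2) = (x(l+1,m+1)/x(l+1,m+2)) · (ψ(l+1,m) − ψ(l,m)) / (ψ(l+1,m+1) − ψ(l,m+1)), provided ψ(l+1,m+1) ≠ ψ(l,m+1). -/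
theorem stmt_5 (x z : ℤ × ℤ → ℂ) (hx : ∀ p, x p ≠ 0) (hz : ∀ p, z p ≠ 0)
    (h1 : ∀ l m : ℤ,
      x (l+1, m) / x (l+1, m+1) - x (l, m) / x (l, m+1) = z (l, m+1) / x (l+1, m+1))
    (h2 : ∀ l m : ℤ,
      z (l, m) / z (l, m+1) - z (l+1, m) / z (l+1, m+1) = z (l, m) / x (l+1, m)) :
    ∀ l m : ℤ,
      x (l+1, m+1) / x (l+1, m+2) ≠ x (l, m+1) / x (l, m+2) →
      z (l, m+1) / z (l, m+2) =
        (x (l+1, m+1) / x (l+1, m+2)) *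
          ((x (l+1, m) / x (l+1, m+1) - x (l, m) / x (l, m+1)) /
            (x (l+1, m+1) / x (l+1, m+2) - x (l, m+1) / x (l, m+2))) := by
  intro l m hne
  have A := h1 l m
  have B := h1 l (m+1)
  rw [show m+1+1 = m+2 by ring] at B
  have hsub : x (l+1, m+1) / x (l+1, m+2) - x (l, m+1) / x (l, m+2) ≠ 0 :=
    sub_ne_zero.mpr hne
  have hX1 := hx (l+1, m+1)
  have hX2 := hx (l+1, m+2)
  have hz2 := hz (l, m+2)
  rw [A, B]
  field_simp
end

section
/- Let a, α : ℤ × ℤ → ℂ* (nowhere-zero complex-valued functions) satisfy a(l,m+1)·α(l,m) = a(l,m)·α(l+1,m) for all (l,m). Then there exist nowhere-zero functions v : ℤ × ℤ → ℂ, λ : ℤ → ℂ, μ : ℤ → ℂ such that a(l,m) = λ(l)·v(l+1,m)/v(l,m) and α(l,m) = μ(m)·v(l,m+1)/v(l,m) for all (l,m). -/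
/-!
Along each horizontal line the potential `v(l, m)` can be taken to be the oriented product of
`a(k, m)` over `0 ≤ k < l`, so one may take `λ ≡ 1`. The compatibility condition then says exactly
that `α(l, m) v(l, m) / v(l, m + 1)` does not change when `l` is shifted, so it equals its value
`α(0, m)` at `l = 0`; this is `μ(m)`.
-/

open Finset

section SignedProd

variable {G : Type*} [CommGroup G]

/-- The oriented product of `f` over `[0, n)`: for `n < 0` it is the inverse of the product over
`[n, 0)`. -/
noncomputable def signedProd (f : ℤ → G) (n : ℤ) : G :=
  (∏ k ∈ Ico 0 n, f k) / ∏ k ∈ Ico n 0, f k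

@[simp]
theorem signedProd_zero (f : ℤ → G) : signedProd f 0 = 1 := by
  simp [signedProd]

theorem signedProd_add_one (f : ℤ → G) (n : ℤ) :
    signedProd f (n + 1) = signedProd f n * f n := by
  rcases le_or_gt 0 n with hn | hn
  · rw [signedProd, signedProd, Ico_eq_empty_of_le (by lia : 0 ≤ n + 1),
      Ico_eq_empty_of_le hn, ← prod_Ico_mul_eq_prod_Ico_add_one hn]
    simp
  · rw [signedProd, signedProd, Ico_eq_empty_of_le (by lia : n + 1 ≤ 0),
      Ico_eq_empty_of_le hn.le, ← insert_Ico_add_one_left_eq_Ico hn, prod_insert (by simp)]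
    simp

end SignedProd

theorem exists_potential_of_mul_compat {G : Type*} [CommGroup G] (a α : ℤ × ℤ → G)
    (h : ∀ l m : ℤ, a (l, m + 1) * α (l, m) = a (l, m) * α (l + 1, m)) :
    ∃ (v : ℤ × ℤ → G) (μ : ℤ → G),
      (∀ l m : ℤ, a (l, m) = v (l + 1, m) / v (l, m)) ∧
      (∀ l m : ℤ, α (l, m) = μ m * v (l, m + 1) / v (l, m)) := by
  set v : ℤ × ℤ → G := fun p => signedProd (fun k => a (k, p.2)) p.1
  have hv : ∀ l m, v (l + 1, m) = v (l, m) * a (l, m) := fun l m => signedProd_add_one _ l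
  refine ⟨v, fun m => α (0, m), fun l m => by rw [hv, mul_div_cancel_left], fun l m => ?_⟩
  have hperiodic : Function.Periodic (fun l => α (l, m) * v (l, m) / v (l, m + 1)) 1 := by
    intro l
    dsimp only
    calc α (l + 1, m) * v (l + 1, m) / v (l + 1, m + 1)
        = (a (l, m) * α (l + 1, m)) * v (l, m) / (a (l, m + 1) * v (l, m + 1)) := by
          rw [hv, hv]
          simp only [div_eq_mul_inv, mul_inv]
          ac_rfl
      _ = (a (l, m + 1) * α (l, m)) * v (l, m) / (a (l, m + 1) * v (l, m + 1)) := by rw [h]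
      _ = α (l, m) * v (l, m) / v (l, m + 1) := by rw [mul_assoc, mul_div_mul_left_eq_div]
  have hconst := hperiodic.int_mul_eq l
  have hv0 : v (0, m) = 1 ∧ v (0, m + 1) = 1 := ⟨signedProd_zero _, signedProd_zero _⟩
  simp only [Int.cast_id, mul_one, hv0, div_one] at hconst
  dsimp only
  rw [← hconst, div_mul_cancel, mul_div_cancel_right]

theorem stmt_7 (a α : ℤ × ℤ → ℂ) (ha : ∀ p, a p ≠ 0) (hα : ∀ p, α p ≠ 0)
    (h : ∀ l m : ℤ, a (l, m+1) * α (l, m) = a (l, m) * α (l+1, m)) :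
    ∃ (v : ℤ × ℤ → ℂ) (lam μ : ℤ → ℂ),
      (∀ p, v p ≠ 0) ∧ (∀ l, lam l ≠ 0) ∧ (∀ m, μ m ≠ 0) ∧
      (∀ l m : ℤ, a (l, m) = lam l * v (l+1, m) / v (l, m)) ∧
      (∀ l m : ℤ, α (l, m) = μ m * v (l, m+1) / v (l, m)) := by
  obtain ⟨v, μ, hav, hαv⟩ := exists_potential_of_mul_compat
    (fun p => Units.mk0 (a p) (ha p)) (fun p => Units.mk0 (α p) (hα p))
    (fun l m => Units.ext (by simpa using h l m))
  refine ⟨fun p => v p, fun _ => 1, fun m => μ m, fun p => (v p).ne_zero, fun _ => one_ne_zero,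
    fun m => (μ m).ne_zero, fun l m => ?_, fun l m => ?_⟩
  · simpa using congrArg Units.val (hav l m)
  · simpa using congrArg Units.val (hαv l m)
end

section
/- Let t, u : ℤ × ℤ → ℂ be nowhere zero, λ₂, μ₂ : ℤ → ℂ, λ₃, μ₃ : ℤ → ℂ nowhere zero, and set ρ(l,m) = λ₃(l)^((−1)^m) and σ(l,m) = μ₃(m)^((−1)^l) (using that λ₃, μ₃ take values in ℂ*, with z^(−1) meaning the inverse). Define b = λ₂ ρ t̄/u, c = (λ₂/ρ) ū/t, β = (μ₂/σ) t̂/u, γ = μ₂ σ û/t, where bar shifts l by 1 and hat shifts m by 1. Then b, c, β, γ satisfy the coupled pair of lattice equations b(l,m+1)·γ(l,m) = c(l,m)·β(l+1,m) and c(l,m+1)·β(l,m) = b(l,m)·γ(l+1,m) for all (l,m). -/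
/-! Shifting `m` (resp. `l`) by one flips the sign of the exponent, so `ρ` and `σ` are inverted;
after that both sides of each equation are the same monomial, once the common factors of `t`
and `u` cancel. -/

theorem zpow_neg_one_pow_add_one {G : Type*} [DivisionMonoid G] (x : G) (m : ℤ) :
    x ^ (((-1 : ℤˣ) ^ (m + 1) : ℤˣ) : ℤ) = (x ^ (((-1 : ℤˣ) ^ m : ℤˣ) : ℤ))⁻¹ := by
  rw [zpow_add_one, Units.val_mul, Units.val_neg, Units.val_one, mul_neg_one, zpow_neg]

theorem stmt_9_general (t u : ℤ × ℤ → ℂ) (ht : ∀ p, t p ≠ 0) (hu : ∀ p, u p ≠ 0)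
    (lam₂ μ₂ lam₃ μ₃ : ℤ → ℂ)
    (ρ σ : ℤ → ℤ → ℂ)
    (hρ : ∀ l m : ℤ, ρ l m = lam₃ l ^ ((((-1 : ℤˣ) ^ m : ℤˣ) : ℤ)))
    (hσ : ∀ l m : ℤ, σ l m = μ₃ m ^ ((((-1 : ℤˣ) ^ l : ℤˣ) : ℤ)))
    (b c β γ : ℤ × ℤ → ℂ)
    (hb : ∀ l m : ℤ, b (l, m) = lam₂ l * ρ l m * t (l+1, m) / u (l, m))
    (hc : ∀ l m : ℤ, c (l, m) = lam₂ l / ρ l m * u (l+1, m) / t (l, m))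
    (hβ : ∀ l m : ℤ, β (l, m) = μ₂ m / σ l m * t (l, m+1) / u (l, m))
    (hγ : ∀ l m : ℤ, γ (l, m) = μ₂ m * σ l m * u (l, m+1) / t (l, m)) :
    ∀ l m : ℤ,
      b (l, m+1) * γ (l, m) = c (l, m) * β (l+1, m) ∧
      c (l, m+1) * β (l, m) = b (l, m) * γ (l+1, m) := by
  intro l m
  have hρ_succ : ρ l (m + 1) = (ρ l m)⁻¹ := by rw [hρ, hρ, zpow_neg_one_pow_add_one]
  have hσ_succ : σ (l + 1) m = (σ l m)⁻¹ := by rw [hσ, hσ, zpow_neg_one_pow_add_one]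
  have := ht (l, m + 1)
  have := ht (l + 1, m)
  have := hu (l, m + 1)
  have := hu (l + 1, m)
  rw [hb, hc, hβ, hγ, hb, hc, hβ, hγ, hρ_succ, hσ_succ]
  constructor <;> field_simp

theorem stmt_9 (t u : ℤ × ℤ → ℂ) (ht : ∀ p, t p ≠ 0) (hu : ∀ p, u p ≠ 0)
    (lam₂ μ₂ lam₃ μ₃ : ℤ → ℂ) (hlam₃ : ∀ l, lam₃ l ≠ 0) (hμ₃ : ∀ m, μ₃ m ≠ 0)
    (ρ σ : ℤ → ℤ → ℂ)
    (hρ : ∀ l m : ℤ, ρ l m = lam₃ l ^ ((((-1 : ℤˣ) ^ m : ℤˣ) : ℤ)))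
    (hσ : ∀ l m : ℤ, σ l m = μ₃ m ^ ((((-1 : ℤˣ) ^ l : ℤˣ) : ℤ)))
    (b c β γ : ℤ × ℤ → ℂ)
    (hb : ∀ l m : ℤ, b (l, m) = lam₂ l * ρ l m * t (l+1, m) / u (l, m))
    (hc : ∀ l m : ℤ, c (l, m) = lam₂ l / ρ l m * u (l+1, m) / t (l, m))
    (hβ : ∀ l m : ℤ, β (l, m) = μ₂ m / σ l m * t (l, m+1) / u (l, m))
    (hγ : ∀ l m : ℤ, γ (l, m) = μ₂ m * σ l m * u (l, m+1) / t (l, m)) :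
    ∀ l m : ℤ,
      b (l, m+1) * γ (l, m) = c (l, m) * β (l+1, m) ∧
      c (l, m+1) * β (l, m) = b (l, m) * γ (l+1, m) :=
  stmt_9_general t u ht hu lam₂ μ₂ lam₃ μ₃ ρ σ hρ hσ b c β γ hb hc hβ hγ
end

section
/- Let x, z : ℤ × ℤ → ℂ be nowhere zero and for ν ∈ ℂ define L(l,m) = [[x(l+1,m)/x(l,m), ν],[ν, 0]] and M(l,m) = [[x(l,m+1)/x(l,m), ν],[ν, z(l,m+1)/z(l,m)]]. Then L(l,m+1)·M(l,m) = M(l+1,m)·L(l,m) for all (l,m) and all ν ∈ ℂ if and only if for all (l,m): x(l+1,m+1)/x(l,m+1) + z(l,m+1)/z(l,m) = x(l+1,m+1)/x(l+1,m) and x(l+1,m)/x(l,m) + z(l+1,m+1)/z(l+1,m) = x(l,m+1)/x(l,m). -/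
theorem stmt_10 (x z : ℤ × ℤ → ℂ) (hx : ∀ p, x p ≠ 0) (hz : ∀ p, z p ≠ 0) :
    (∀ (ν : ℂ) (l m : ℤ),
      (!![x (l+1, m+1) / x (l, m+1), ν; ν, (0 : ℂ)] *
        !![x (l, m+1) / x (l, m), ν; ν, z (l, m+1) / z (l, m)]) =
      (!![x (l+1, m+1) / x (l+1, m), ν; ν, z (l+1, m+1) / z (l+1, m)] *
        !![x (l+1, m) / x (l, m), ν; ν, (0 : ℂ)])) ↔
    (∀ l m : ℤ,
      x (l+1, m+1) / x (l, m+1) + z (l, m+1) / z (l, m) = x (l+1, m+1) / x (l+1, m) ∧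
      x (l+1, m) / x (l, m) + z (l+1, m+1) / z (l+1, m) = x (l, m+1) / x (l, m)) := by
  constructor
  · intro h l m
    have h1 := h 1 l m
    rw [Matrix.ext_iff.symm] at h1
    have e01 := h1 0 1
    have e10 := h1 1 0
    simp [Matrix.mul_apply, Fin.sum_univ_two] at e01 e10
    constructor
    · linear_combination e01
    · linear_combination -e10
  · intro h ν l m
    obtain ⟨h1, h2⟩ := h l m
    have hcanc : x (l+1, m+1) / x (l, m+1) * (x (l, m+1) / x (l, m)) =
        x (l+1, m+1) / x (l+1, m) * (x (l+1, m) / x (l, m)) := by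
      rw [div_mul_div_comm, div_mul_div_comm, mul_comm (x (l, m+1)),
        mul_comm (x (l+1, m)),
        mul_div_mul_right _ _ (hx (l, m+1)), mul_div_mul_right _ _ (hx (l+1, m))]
    ext i j
    fin_cases i <;> fin_cases j <;>
      simp [Matrix.mul_apply, Fin.sum_univ_two]
    · linear_combination hcanc
    · linear_combination ν * h1
    · linear_combination -ν * h2
end

section
/- Let x, z : ℤ × ℤ → ℂ be nowhere zero, λ₁ : ℤ → ℂ, and for ν ∈ ℂ define L(l,m) = [[x(l+1,m)/x(l,m), ν],[ν, λ₁(l)·z(l+1,m)/z(l,m)]] and M(l,m) = [[x(l,m+1)/x(l,m), ν],[ν, z(l,m+1)/z(l,m)]]. Then L(l,m+1)·M(l,m) = M(l+1,m)·L(l,m) holds for all (l,m) and all ν ∈ ℂ if and only if for all (l,m): x(l+1,m+1)/x(l,m+1) + z(l,m+1)/z(l,m) = λ₁(l)·z(l+1,m)/z(l,m) + x(l+1,m+1)/x(l+1,m) and x(l,m+1)/x(l,m) + λ₁(l)·z(l+1,m+1)/z(l,m+1) = x(l+1,m)/x(l,m) + z(l+1,m+1)/z(l+1,m). -/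
theorem stmt_11 (x z : ℤ × ℤ → ℂ) (hx : ∀ p, x p ≠ 0) (hz : ∀ p, z p ≠ 0)
    (lam₁ : ℤ → ℂ) :
    (∀ (ν : ℂ) (l m : ℤ),
      (!![x (l+1, m+1) / x (l, m+1), ν; ν, lam₁ l * z (l+1, m+1) / z (l, m+1)] *
        !![x (l, m+1) / x (l, m), ν; ν, z (l, m+1) / z (l, m)]) =
      (!![x (l+1, m+1) / x (l+1, m), ν; ν, z (l+1, m+1) / z (l+1, m)] *
        !![x (l+1, m) / x (l, m), ν; ν, lam₁ l * z (l+1, m) / z (l, m)])) ↔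
    (∀ l m : ℤ,
      x (l+1, m+1) / x (l, m+1) + z (l, m+1) / z (l, m) =
        lam₁ l * z (l+1, m) / z (l, m) + x (l+1, m+1) / x (l+1, m) ∧
      x (l, m+1) / x (l, m) + lam₁ l * z (l+1, m+1) / z (l, m+1) =
        x (l+1, m) / x (l, m) + z (l+1, m+1) / z (l+1, m)) := by
  constructor
  · intro h l m
    have h1 := Matrix.ext_iff.mpr (h 1 l m)
    have e01 := h1 0 1
    have e10 := h1 1 0
    simp [Matrix.mul_apply, Fin.sum_univ_succ] at e01 e10
    constructor
    · linear_combination e01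
    · linear_combination e10
  · intro h ν l m
    obtain ⟨h1, h2⟩ := h l m
    ext i j
    fin_cases i <;> fin_cases j <;>
      simp [Matrix.mul_apply, Fin.sum_univ_succ]
    · field_simp [hx (l,m), hx (l,m+1), hx (l+1,m), hz (l,m), hz (l,m+1), hz (l+1,m)]
    · linear_combination ν * h1
    · linear_combination ν * h2
    · field_simp [hx (l,m), hx (l,m+1), hx (l+1,m), hz (l,m), hz (l,m+1), hz (l+1,m)]
end

section
/- Let a, b, c, d, α, β, γ, δ : ℤ × ℤ → ℂ satisfy the four lattice equations (for all (l,m), bar = shift in l, hat = shift in m): (1,1) â α − a ᾱ = c β̄; (1,2) â β = d β̄; (2,1) ĉ α = c δ̄; (2,2) d δ̄ − d̂ δ = ĉ β, where β and c are nowhere zero. Define d(l,m) = a(l,m+1)·β(l,m)/β(l+1,m) and α(l,m) = δ(l+1,m)·c(l,m)/c(l,m+1), consistent with (1,2) and (2,1). If a = λ₁ ρ t̄/t, c = μ₂ v/(t̂ t), δ = μ₁ σ û/u, β = λ₂ v/(ū u) with t ≡ u ≡ 1, v = 1/x, and all arbitrary functions equal to 1, then the system reduces to x(l+1,m)·x(l,m+1)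 − x(l,m)·x(l+1,m+1) = 1. -/
theorem stmt_14 (x : ℤ × ℤ → ℂ) (hx : ∀ p, x p ≠ 0)
    (a c β δ d α : ℤ × ℤ → ℂ)
    (ha : ∀ l m : ℤ, a (l, m) = 1) (hδ : ∀ l m : ℤ, δ (l, m) = 1)
    (hc : ∀ l m : ℤ, c (l, m) = 1 / x (l, m))
    (hβ : ∀ l m : ℤ, β (l, m) = 1 / x (l, m))
    (hd : ∀ l m : ℤ, d (l, m) = x (l+1, m) / x (l, m))
    (hα : ∀ l m : ℤ, α (l, m) = x (l, m+1) / x (l, m)) :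
    (∀ l m : ℤ,
      a (l, m+1) * α (l, m) - a (l, m) * α (l+1, m) = c (l, m) * β (l+1, m) ∧
      a (l, m+1) * β (l, m) = d (l, m) * β (l+1, m) ∧
      c (l, m+1) * α (l, m) = c (l, m) * δ (l+1, m) ∧
      d (l, m) * δ (l+1, m) - d (l, m+1) * δ (l, m) = c (l, m+1) * β (l, m)) ↔
    (∀ l m : ℤ, x (l+1, m) * x (l, m+1) - x (l, m) * x (l+1, m+1) = 1) := by
  constructor
  · intro h l m
    have h1 := (h l m).2.2.2
    rw [hd, hd, hδ, hδ, hc, hβ] at h1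
    have h2 := hx (l, m); have h3 := hx (l, m+1)
    field_simp at h1
    exact mul_right_cancel₀ (mul_ne_zero h3 h2) (by linear_combination (x (l, m+1) * x (l, m)) * h1)
  · intro h l m
    have h2 := hx (l, m); have h3 := hx (l, m+1)
    have h4 := hx (l+1, m); have h5 := hx (l+1, m+1)
    have key := h l m
    refine ⟨?_, ?_, ?_, ?_⟩
    · simp only [ha, hδ, hc, hβ, hd, hα]; field_simp; linear_combination key
    · simp only [ha, hδ, hc, hβ, hd, hα]; field_simp
    · simp only [ha, hδ, hc, hβ, hd, hα]; field_simp
    · simp only [ha, hδ, hc, hβ, hd, hα]; field_simp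
      linear_combination key
end
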